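/- Let n ≥ 5 and let V be a set of words of common length L over an n-letter alphabet such that any concatenation of two distinct words of V has local exponent at most n/(n-1). If v₁, v₂, v₃ ∈ V are pairwise distinct and v is a factor of v₁ and of v₂v₃ such that v is not a factor of v₂ and not a factor of v₃, then |v| < 2L/(n-1). -/

import Mathlib

open List

/-- `p` is a period of the word `w`. -/
def HasPeriod {α : Type*} (w : List α) (p : ℕ) : Prop :=
  1 ≤ p ∧ ∀ i, i + p < w.length → w[i]? = w[i + p]?

/-- minimal period of a word -/
noncomputable def per {α : Type*} (w : List α) : ℕ := sInf {p | _root_.HasPeriod w p}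

/-- local exponent of `w` is at most `q`: every nonempty factor has exponent ≤ q. -/
noncomputable def lexpLE {α : Type*} (w : List α) (q : ℚ) : Prop :=
  ∀ v : List α, v <:+: w → v ≠ [] → (v.length : ℚ) / per v ≤ q

/-- `v` is a (finite) factor of the infinite word `ω`. -/
def FactorOfInf {α : Type*} (v : List α) (ω : ℕ → α) : Prop :=
  ∃ i : ℕ, v = List.ofFn (fun j : Fin v.length => ω (i + j))

/-!
Write `v = s ++ p` with `s` a nonempty suffix of `v₂` and `p` a nonempty prefix of `v₃`, and
`v₁ = a ++ v ++ b`. Then `s ++ a ++ s` is a factor of `v₂ ++ v₁` with period `|s| + |a|`, so the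
exponent bound gives `(n - 2) |s| ≤ |a|`; symmetrically `p ++ b ++ p` is a factor of `v₁ ++ v₃`
and `(n - 2) |p| ≤ |b|`. Adding, `(n - 1) |v| ≤ |a| + |v| + |b| = L`.
-/

theorem List.exists_suffix_prefix_of_infix_append {α : Type*} {v x y : List α}
    (h : v <:+: x ++ y) (hx : ¬ v <:+: x) (hy : ¬ v <:+: y) :
    ∃ s p, s ≠ [] ∧ p ≠ [] ∧ s <:+ x ∧ p <+: y ∧ v = s ++ p := by
  obtain ⟨t, u, htu⟩ := h
  rw [append_assoc, eq_comm, append_eq_append_iff] at htu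
  obtain ⟨t', -, hy'⟩ | ⟨s, rfl, hvu⟩ := htu
  · exact absurd ⟨t', u, by rw [hy', append_assoc]⟩ hy
  obtain ⟨s', rfl, -⟩ | ⟨p, rfl, rfl⟩ := append_eq_append_iff.mp hvu
  · exact absurd ⟨t, s', append_assoc .. ▸ rfl⟩ hx
  refine ⟨s, p, ?_, ?_, suffix_append t s, prefix_append p u, rfl⟩
  · rintro rfl
    exact hy (prefix_append p u).isInfix
  · rintro rfl
    exact hx (by simpa using (suffix_append t s).isInfix)

theorem hasPeriod_append_append_self {α : Type*} {x : List α} (hx : x ≠ []) (y : List α) :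
    _root_.HasPeriod (x ++ y ++ x) (x.length + y.length) := by
  have hxl : 0 < x.length := length_pos_iff.mpr hx
  refine ⟨by omega, fun i hi ↦ ?_⟩
  simp only [length_append] at hi
  rw [append_assoc, getElem?_append_left (by omega), getElem?_append_right (by omega),
    getElem?_append_right (by omega)]
  congr 1
  omega

theorem HasPeriod.per_le {α : Type*} {w : List α} {p : ℕ} (h : _root_.HasPeriod w p) :
    per w ≤ p :=
  Nat.sInf_le h

theorem HasPeriod.one_le_per {α : Type*} {w : List α} {p : ℕ} (h : _root_.HasPeriod w p) :
    1 ≤ per w :=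
  (Nat.sInf_mem (s := {p | _root_.HasPeriod w p}) ⟨p, h⟩).1

theorem lexpLE.two_mul_length_add_length_le {α : Type*} {w : List α} {q : ℚ}
    (hw : lexpLE w q) {x : List α} (hx : x ≠ []) (y : List α) (hxyx : x ++ y ++ x <:+: w) :
    2 * (x.length : ℚ) + y.length ≤ q * (x.length + y.length) := by
  have hper := hasPeriod_append_append_self hx y
  have hpos : (0 : ℚ) < per (x ++ y ++ x) := by exact_mod_cast hper.one_le_per
  have hle : (per (x ++ y ++ x) : ℚ) ≤ x.length + y.length := by exact_mod_cast hper.per_le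
  have hexp := hw _ hxyx (by simp [hx])
  rw [div_le_iff₀ hpos] at hexp
  have hq : 0 ≤ q := le_trans (by positivity) (hw x ((prefix_append x (y ++ x)).isInfix.trans (append_assoc x y x ▸ hxyx)) hx)
  calc 2 * (x.length : ℚ) + y.length = (x ++ y ++ x).length := by
        simp only [length_append]; push_cast; ring
    _ ≤ q * per (x ++ y ++ x) := hexp
    _ ≤ q * (x.length + y.length) := by gcongr

theorem stmt3_general (n L : ℕ) (hn : 5 ≤ n) (V : Set (List (Fin n)))
    (hlen : ∀ v ∈ V, v.length = L)
    (hpair : ∀ u ∈ V, ∀ v ∈ V, u ≠ v → lexpLE (u ++ v) ((n : ℚ) / (n - 1)))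
    (v₁ v₂ v₃ : List (Fin n)) (h₁ : v₁ ∈ V) (h₂ : v₂ ∈ V) (h₃ : v₃ ∈ V)
    (h12 : v₁ ≠ v₂) (h13 : v₁ ≠ v₃)
    (v : List (Fin n)) (hf₁ : v <:+: v₁) (hf₂ : v <:+: v₂ ++ v₃)
    (hn₂ : ¬ v <:+: v₂) (hn₃ : ¬ v <:+: v₃) :
    (v.length : ℚ) < 2 * L / (n - 1) := by
  obtain ⟨s, p, hs, hp, ⟨t, rfl⟩, ⟨u, rfl⟩, rfl⟩ :=
    exists_suffix_prefix_of_infix_append hf₂ hn₂ hn₃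
  obtain ⟨a, b, rfl⟩ := hf₁
  have hsa := (hpair _ h₂ _ h₁ h12.symm).two_mul_length_add_length_le hs a
    ⟨t, p ++ b, by simp⟩
  have hpb := (hpair _ h₁ _ h₃ h13).two_mul_length_add_length_le hp b
    ⟨a ++ s, u, by simp⟩
  have hL : (a.length : ℚ) + s.length + p.length + b.length = L := by
    rw [← hlen _ h₁]; simp only [length_append]; push_cast; ring
  have hs1 : (1 : ℚ) ≤ s.length := by exact_mod_cast length_pos_iff.mpr hs
  have hn1 : (4 : ℚ) ≤ n - 1 := by
    have : (5 : ℚ) ≤ n := by exact_mod_cast hn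
    linarith
  rw [div_mul_eq_mul_div, le_div_iff₀ (by linarith)] at hsa hpb
  rw [lt_div_iff₀ (by linarith), length_append]
  push_cast
  nlinarith

theorem stmt3 (n L : ℕ) (hn : 5 ≤ n) (V : Set (List (Fin n)))
    (hlen : ∀ v ∈ V, v.length = L)
    (hpair : ∀ u ∈ V, ∀ v ∈ V, u ≠ v → lexpLE (u ++ v) ((n : ℚ) / (n - 1)))
    (v₁ v₂ v₃ : List (Fin n)) (h₁ : v₁ ∈ V) (h₂ : v₂ ∈ V) (h₃ : v₃ ∈ V)
    (h12 : v₁ ≠ v₂) (h13 : v₁ ≠ v₃) (h23 : v₂ ≠ v₃)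
    (v : List (Fin n)) (hf₁ : v <:+: v₁) (hf₂ : v <:+: v₂ ++ v₃)
    (hn₂ : ¬ v <:+: v₂) (hn₃ : ¬ v <:+: v₃) :
    (v.length : ℚ) < 2 * L / (n - 1) :=
  stmt3_general n L hn V hlen hpair v₁ v₂ v₃ h₁ h₂ h₃ h12 h13 v hf₁ hf₂ hn₂ hn₃
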